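/- arXiv:2201.12198 — 5 statements merged into one kernel-verified Lean document; each statement's English description precedes it below -/
import Mathlib

section
/- Consider the one-hidden-neuron model f(θ, x) = a e^{xᵀw} with θ = (w, a) ∈ R^{M-1} × R, loss L(θ) = |a e^{xᵀw} − y|² for fixed sample (x, y) ∈ R^{M-1} × R, and the gradient flow θ'(t) = −∇L(θ(t)) with θ(0) = (w₀, a₀). Then along any solution, w(t) = w₀ + ((a(t)² − a₀²)/2) x for all t ≥ 0. -/
/-- For the model `f((w,a), x) = a e^{xᵀw}` with loss `|a e^{xᵀw} - y|²`, along any gradient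
flow trajectory one has `w(t) = w₀ + ((a(t)² - a₀²)/2) x` for all `t ≥ 0`. -/
theorem exp_model_parabola {n : ℕ} (x : Fin n → ℝ) (y : ℝ)
    (w : ℝ → Fin n → ℝ) (a : ℝ → ℝ) (w₀ : Fin n → ℝ) (a₀ : ℝ)
    (hw0 : w 0 = w₀) (ha0 : a 0 = a₀)
    (hda : ∀ t ≥ (0:ℝ), HasDerivAt a
      (-2 * (a t * Real.exp (∑ i, x i * w t i) - y) * Real.exp (∑ i, x i * w t i)) t)
    (hdw : ∀ t ≥ (0:ℝ), HasDerivAt w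
      ((-2 * (a t * Real.exp (∑ i, x i * w t i) - y) * a t * Real.exp (∑ i, x i * w t i)) • x) t) :
    ∀ t ≥ (0:ℝ), w t = w₀ + ((a t ^ 2 - a₀ ^ 2) / 2) • x := by
  intro t ht
  set F : ℝ → Fin n → ℝ := fun s => w s - ((a s) ^ 2 / 2) • x with hF
  have key : ∀ s, 0 ≤ s → HasDerivAt F 0 s := by
    intro s hs
    have h1 := hdw s hs
    have h2 : HasDerivAt (fun u => ((a u) ^ 2 / 2) • x)
        ((-2 * (a s * Real.exp (∑ i, x i * w s i) - y) * a s
          * Real.exp (∑ i, x i * w s i)) • x) s := by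
      have h3 := (((hda s hs).pow 2).div_const 2).smul_const x
      refine h3.congr_deriv ?_
      congr 1
      ring
    have h4 := h1.sub h2
    simp at h4
    exact h4
  have hconst : F t = F 0 := by
    have := constant_of_has_deriv_right_zero (f := F) (a := 0) (b := t)
      (fun s hs => ((key s hs.1).continuousAt).continuousWithinAt)
      (fun s hs => (key s hs.1).hasDerivWithinAt)
    exact this t ⟨ht, le_refl t⟩ |>.trans rfl
  have h0 : F 0 = w₀ - (a₀ ^ 2 / 2) • x := by simp [hF, hw0, ha0]
  have ht' : w t - (a t ^ 2 / 2) • x = w₀ - (a₀ ^ 2 / 2) • x := by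
    rw [← h0, ← hconst]
  funext i
  have := congrFun ht' i
  simp only [Pi.sub_apply, Pi.add_apply, Pi.smul_apply, smul_eq_mul] at this ⊢
  linarith
end

section
/- Let σ : R → R be differentiable with σ > 0 and σ' > 0, and fix w₀ ∈ R, a₀ ≠ 0. Then the function x ↦ σ(x w₀)/(a₀ x σ'(x w₀)) on R \ {0} cannot be constant; equivalently, there is no constant k ≠ 0 with σ'(xw₀)/σ(xw₀) = 1/(a₀ k x) for all x ≠ 0. -/
/-- With `σ > 0` and `σ' > 0` and `a₀ ≠ 0`, the map
`x ↦ σ(x w₀) / (a₀ x σ'(x w₀))` on `ℝ \ {0}` cannot be constant. -/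
theorem limiting_slope_not_constant (σ : ℝ → ℝ)
    (hσd : Differentiable ℝ σ) (hσpos : ∀ z, 0 < σ z) (hσ'pos : ∀ z, 0 < deriv σ z)
    (w₀ a₀ : ℝ) (ha₀ : a₀ ≠ 0) :
    ¬ ∃ c : ℝ, ∀ x : ℝ, x ≠ 0 →
      σ (x * w₀) / (a₀ * x * deriv σ (x * w₀)) = c := by
  rintro ⟨c, hc⟩
  have h1 := hc 1 one_ne_zero
  have h2 := hc (-1) (by norm_num)
  rw [div_eq_iff (by
    have := hσ'pos (1 * w₀)
    rcases ha₀.lt_or_gt with h | h <;> intro hh <;> nlinarith)] at h1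
  rw [div_eq_iff (by
    have := hσ'pos ((-1) * w₀)
    rcases ha₀.lt_or_gt with h | h <;> intro hh <;> nlinarith)] at h2
  have p1 := hσpos (1 * w₀)
  have p2 := hσpos ((-1) * w₀)
  have q1 := hσ'pos (1 * w₀)
  have q2 := hσ'pos ((-1) * w₀)
  nlinarith [mul_pos p1 p2, mul_pos q1 q2, sq_nonneg (c * a₀), mul_pos (mul_pos p1 p2) (mul_pos q1 q2)]
end

section
/- Let τ ∈ C²(R), fix w ≠ 0, x₀ ≠ 0, y₀ ≠ 0 with τ(x₀ w) ≠ 0, τ'(x₀ w) ≠ 0, and assume 1/w − x₀ [τ'(x₀w)/τ(x₀w) − τ''(x₀w)/τ'(x₀w)] ≠ 0. Then there exists δ > 0 such that whenever 0 < |x − x₀| < δ, y ≠ 0, and y τ(xw) = y₀ τ(x₀ w), there is no p with 0 < |p − w| < δ and y τ(xp) = y₀ τ(x₀ p). -/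
open Set

private lemma mvt' (f f' : ℝ → ℝ) (hf : ∀ t, HasDerivAt f (f' t) t) (a b : ℝ) (hab : b ≠ a) :
    ∃ c, |c - a| < |b - a| ∧ f b - f a = f' c * (b - a) := by
  rcases lt_or_gt_of_ne hab with h | h
  · obtain ⟨c, hc, hc'⟩ := exists_hasDerivAt_eq_slope f f' h
      (fun t _ => (hf t).continuousAt.continuousWithinAt) (fun t _ => hf t)
    refine ⟨c, ?_, ?_⟩
    · rw [abs_of_neg (by linarith [hc.2] : c - a < 0), abs_of_neg (by linarith : b - a < 0)]
      linarith [hc.1]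
    · have hne : a - b ≠ 0 := by linarith
      rw [hc']; field_simp; ring
  · obtain ⟨c, hc, hc'⟩ := exists_hasDerivAt_eq_slope f f' h
      (fun t _ => (hf t).continuousAt.continuousWithinAt) (fun t _ => hf t)
    refine ⟨c, ?_, ?_⟩
    · rw [abs_of_pos (by linarith [hc.1] : 0 < c - a), abs_of_pos (by linarith : 0 < b - a)]
      linarith [hc.2]
    · have hne : b - a ≠ 0 := by linarith
      rw [hc']; field_simp

private lemma keyL (F F' : ℝ → ℝ) (hF : ∀ t, HasDerivAt F (F' t) t) (a c : ℝ) :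
    HasDerivAt (fun t => F (a * t)) (a * F' (a * c)) c := by
  have h := (hF (a * c)).comp c ((hasDerivAt_id c).const_mul a)
  simpa [Function.comp_def, mul_comm] using h

private lemma keyR (F F' : ℝ → ℝ) (hF : ∀ t, HasDerivAt F (F' t) t) (a c : ℝ) :
    HasDerivAt (fun t => F (t * a)) (a * F' (c * a)) c := by
  have h := (hF (c * a)).comp c ((hasDerivAt_id c).mul_const a)
  simpa [Function.comp_def, mul_comm] using h

/-- Two-point intersection obstruction under a C² non-degeneracy condition on `τ`. -/
theorem no_double_intersection_C2 (τ : ℝ → ℝ) (hτ : ContDiff ℝ 2 τ)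
    (w x₀ y₀ : ℝ) (hw : w ≠ 0) (hx₀ : x₀ ≠ 0) (hy₀ : y₀ ≠ 0)
    (hτ0 : τ (x₀ * w) ≠ 0) (hτ'0 : deriv τ (x₀ * w) ≠ 0)
    (hnd : 1 / w - x₀ * (deriv τ (x₀ * w) / τ (x₀ * w)
      - deriv (deriv τ) (x₀ * w) / deriv τ (x₀ * w)) ≠ 0) :
    ∃ δ > (0:ℝ), ∀ x y : ℝ, 0 < |x - x₀| → |x - x₀| < δ → y ≠ 0 →
      y * τ (x * w) = y₀ * τ (x₀ * w) →
      ¬ ∃ p : ℝ, 0 < |p - w| ∧ |p - w| < δ ∧ y * τ (x * p) = y₀ * τ (x₀ * p) := by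
  have h2 : ContDiff ℝ ((1:ℕ∞)+1) τ := by exact_mod_cast hτ
  have hsucc := contDiff_succ_iff_deriv.mp h2
  have hdiff : Differentiable ℝ τ := hsucc.1
  have hτ'C : ContDiff ℝ 1 (deriv τ) := by exact_mod_cast hsucc.2.2
  have hdiff' : Differentiable ℝ (deriv τ) := hτ'C.differentiable one_ne_zero
  have hcont' : Continuous (deriv τ) := hτ'C.continuous
  have hcont'' : Continuous (deriv (deriv τ)) := hτ'C.continuous_deriv le_rfl
  have hd : ∀ t, HasDerivAt τ (deriv τ t) t := fun t => (hdiff t).hasDerivAt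
  have hd' : ∀ t, HasDerivAt (deriv τ) (deriv (deriv τ) t) t := fun t => (hdiff' t).hasDerivAt
  -- the mixed-partial function M (p, x)
  set M : ℝ × ℝ → ℝ := fun q =>
    w * deriv τ (q.2 * w) * (x₀ * deriv τ (x₀ * q.1)) -
      (1 * deriv τ (q.2 * q.1) + q.2 * (q.1 * deriv (deriv τ) (q.2 * q.1))) * τ (x₀ * w)
    with hMdef
  have hMcont : Continuous M := by
    apply Continuous.sub
    · exact ((continuous_const.mul (hcont'.comp (continuous_snd.mul continuous_const)))).mul
        (continuous_const.mul (hcont'.comp (continuous_const.mul continuous_fst)))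
    · exact ((continuous_const.mul (hcont'.comp (continuous_snd.mul continuous_fst))).add
        (continuous_snd.mul (continuous_fst.mul
          (hcont''.comp (continuous_snd.mul continuous_fst))))).mul continuous_const
  have hM0 : M (w, x₀) ≠ 0 := by
    simp only [hMdef]
    intro h
    apply hnd
    have hxw : x₀ * w = w * x₀ := mul_comm _ _
    rw [show (x₀ : ℝ) * w = x₀ * w from rfl] at h
    field_simp
    rw [mul_zero]
    have ha : τ (w * x₀) ≠ 0 := by rwa [mul_comm]
    have hb : deriv τ (w * x₀) ≠ 0 := by rwa [mul_comm]
    field_simp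
    rw [hxw] at h
    linear_combination -h
  obtain ⟨δ, hδpos, hball⟩ := Metric.continuousAt_iff.mp hMcont.continuousAt |M (w, x₀)|
    (abs_pos.mpr hM0)
  refine ⟨δ, hδpos, ?_⟩
  intro x y hx1 hx2 hy hxy ⟨p, hp1, hp2, hp3⟩
  have hMne : ∀ ξ η : ℝ, |ξ - w| < δ → |η - x₀| < δ → M (ξ, η) ≠ 0 := by
    intro ξ η h1 h2 h0
    have hdist : dist (ξ, η) (w, x₀) < δ := by
      rw [Prod.dist_eq]
      simp only [Real.dist_eq]
      exact max_lt h1 h2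
    have := hball hdist
    rw [Real.dist_eq, h0] at this
    simp at this
  -- F(p, x) = 0
  have hpne : p ≠ w := by
    intro h; rw [h] at hp1; simp at hp1
  have hxne : x ≠ x₀ := by
    intro h; rw [h] at hx1; simp at hx1
  have hyF : y * (τ (x * w) * τ (x₀ * p) - τ (x * p) * τ (x₀ * w)) = 0 := by
    linear_combination τ (x₀ * p) * hxy - τ (x₀ * w) * hp3
  have hF : τ (x * w) * τ (x₀ * p) - τ (x * p) * τ (x₀ * w) = 0 :=
    (mul_eq_zero.mp hyF).resolve_left hy
  -- first MVT in p
  have hf : ∀ t, HasDerivAt (fun p => τ (x * w) * τ (x₀ * p) - τ (x * p) * τ (x₀ * w))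
      (τ (x * w) * (x₀ * deriv τ (x₀ * t)) - x * deriv τ (x * t) * τ (x₀ * w)) t := by
    intro t
    exact ((keyL τ (deriv τ) hd x₀ t).const_mul (τ (x * w))).sub
      ((keyL τ (deriv τ) hd x t).mul_const (τ (x₀ * w)))
  obtain ⟨ξ, hξ, hξeq⟩ := mvt' _ _ hf w p hpne
  have hfw : τ (x * w) * τ (x₀ * w) - τ (x * w) * τ (x₀ * w) = 0 := sub_self _
  have hfξ : τ (x * w) * (x₀ * deriv τ (x₀ * ξ)) - x * deriv τ (x * ξ) * τ (x₀ * w) = 0 := by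
    have hpw : p - w ≠ 0 := sub_ne_zero_of_ne hpne
    have : (τ (x * w) * (x₀ * deriv τ (x₀ * ξ)) - x * deriv τ (x * ξ) * τ (x₀ * w)) * (p - w)
        = 0 := by
      rw [← hξeq, hF]; ring_nf
    exact (mul_eq_zero.mp this).resolve_right hpw
  -- second MVT in x
  have hg : ∀ t, HasDerivAt
      (fun t => τ (t * w) * (x₀ * deriv τ (x₀ * ξ)) - t * deriv τ (t * ξ) * τ (x₀ * w))
      (w * deriv τ (t * w) * (x₀ * deriv τ (x₀ * ξ)) -
        (1 * deriv τ (t * ξ) + t * (ξ * deriv (deriv τ) (t * ξ))) * τ (x₀ * w)) t := by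
    intro t
    exact ((keyR τ (deriv τ) hd w t).mul_const (x₀ * deriv τ (x₀ * ξ))).sub
      (((hasDerivAt_id t).mul (keyR (deriv τ) (deriv (deriv τ)) hd' ξ t)).mul_const (τ (x₀ * w)))
  obtain ⟨η, hη, hηeq⟩ := mvt' _ _ hg x₀ x hxne
  have hgx : τ (x * w) * (x₀ * deriv τ (x₀ * ξ)) - x * deriv τ (x * ξ) * τ (x₀ * w) = 0 := hfξ
  have hgx₀ : τ (x₀ * w) * (x₀ * deriv τ (x₀ * ξ)) - x₀ * deriv τ (x₀ * ξ) * τ (x₀ * w) = 0 := by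
    ring
  have hMξη : M (ξ, η) = 0 := by
    have hxx : x - x₀ ≠ 0 := sub_ne_zero_of_ne hxne
    have h0 : M (ξ, η) * (x - x₀) = 0 := by
      simp only [hMdef]
      rw [← hηeq, hgx, hgx₀]; ring
    exact (mul_eq_zero.mp h0).resolve_right hxx
  exact hMne ξ η (lt_trans hξ hp2) (lt_trans hη hx2) hMξη
end

section
/- Let τ ∈ C²(R), w ≠ 0, x₀ ≠ 0 with τ(x₀w), τ'(x₀w) ≠ 0, and define F(p, x) = τ(xw) τ(x₀ p) − τ(xp) τ(x₀ w). If ∂F/∂p(w, x) ≡ 0 for all x in a neighborhood of x₀, then τ (hence σ = 1/τ) restricted near x₀ w is a power function, i.e., there exist nonzero constants A, B and an exponent q with τ(xw) = (Bx)^q / A for x near x₀. -/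
/-- If `∂F/∂p(w, x) ≡ 0` for `x` near `x₀`, where
`F(p, x) = τ(xw) τ(x₀ p) - τ(xp) τ(x₀ w)`, then `τ` restricted near `x₀ w` is a power
function: `τ(xw) = (Bx)^q / A` for `x` near `x₀`. -/
theorem degenerate_F_implies_power_function (τ : ℝ → ℝ) (hτ : ContDiff ℝ 2 τ)
    (w x₀ : ℝ) (hw : w ≠ 0) (hx₀ : x₀ ≠ 0)
    (hτ0 : τ (x₀ * w) ≠ 0) (hτ'0 : deriv τ (x₀ * w) ≠ 0)
    (ε₀ : ℝ) (hε₀ : 0 < ε₀)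
    (hdeg : ∀ x : ℝ, |x - x₀| < ε₀ →
      deriv (fun p => τ (x * w) * τ (x₀ * p) - τ (x * p) * τ (x₀ * w)) w = 0) :
    ∃ (A B q : ℝ), A ≠ 0 ∧ B ≠ 0 ∧
      ∃ ε > (0:ℝ), ∀ x : ℝ, |x - x₀| < ε → τ (x * w) = (B * x) ^ q / A := by
  have hτd : Differentiable ℝ τ := hτ.differentiable (by norm_num)
  set c : ℝ := x₀ * deriv τ (x₀ * w) / τ (x₀ * w) with hc
  set q : ℝ := w * c with hq
  -- the ODE satisfied by τ near x₀
  have key : ∀ x : ℝ, |x - x₀| < ε₀ → x * deriv τ (x * w) = c * τ (x * w) := by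
    intro x hx
    have h1 : HasDerivAt (fun p => τ (x₀ * p)) (deriv τ (x₀ * w) * (x₀ * 1)) w :=
      ((hτd (x₀ * w)).hasDerivAt).comp w ((hasDerivAt_id w).const_mul x₀)
    have h2 : HasDerivAt (fun p => τ (x * p)) (deriv τ (x * w) * (x * 1)) w :=
      ((hτd (x * w)).hasDerivAt).comp w ((hasDerivAt_id w).const_mul x)
    have hF : HasDerivAt (fun p => τ (x * w) * τ (x₀ * p) - τ (x * p) * τ (x₀ * w))
        (τ (x * w) * (deriv τ (x₀ * w) * (x₀ * 1)) -
          deriv τ (x * w) * (x * 1) * τ (x₀ * w)) w :=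
      (h1.const_mul (τ (x * w))).sub (h2.mul_const (τ (x₀ * w)))
    have h0 := hF.deriv
    rw [hdeg x hx] at h0
    have h0' : τ (x * w) * (deriv τ (x₀ * w) * x₀) = deriv τ (x * w) * x * τ (x₀ * w) := by
      rw [mul_one, mul_one] at h0
      linarith
    rw [hc, div_mul_eq_mul_div, eq_div_iff hτ0]
    linarith [h0']
  -- continuity: τ (x*w) ≠ 0 near x₀
  have hcont : ContinuousAt (fun x : ℝ => τ (x * w)) x₀ :=
    (hτd.continuous.comp (continuous_id.mul continuous_const)).continuousAt
  have hne : ∀ᶠ x in nhds x₀, τ (x * w) ≠ 0 := hcont.eventually_ne hτ0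
  obtain ⟨δ, hδ, hδne⟩ := Metric.eventually_nhds_iff.mp hne
  refine ⟨1 / τ (x₀ * w), 1 / x₀, q, one_div_ne_zero hτ0, one_div_ne_zero hx₀,
    min δ (min ε₀ |x₀|), lt_min hδ (lt_min hε₀ (abs_pos.mpr hx₀)), ?_⟩
  intro x hx
  have hxδ : |x - x₀| < δ := lt_of_lt_of_le hx (min_le_left _ _)
  have hxε : |x - x₀| < ε₀ := lt_of_lt_of_le hx ((min_le_right _ _).trans (min_le_left _ _))
  have hxa : |x - x₀| < |x₀| := lt_of_lt_of_le hx ((min_le_right _ _).trans (min_le_right _ _))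
  -- on the ball, x / x₀ > 0
  have hpos : ∀ y : ℝ, |y - x₀| < |x₀| → 0 < y / x₀ := by
    intro y hy
    rcases abs_lt.mp hy with ⟨hy1, hy2⟩
    rcases lt_or_gt_of_ne hx₀ with h | h
    · have : y < 0 := by rw [abs_of_neg h] at hy2; linarith
      exact div_pos_of_neg_of_neg this h
    · have : 0 < y := by rw [abs_of_pos h] at hy1; linarith
      exact div_pos this h
  -- the auxiliary function h with zero derivative on the ball
  set ε : ℝ := min δ (min ε₀ |x₀|) with hεdef
  set s : Set ℝ := Metric.ball x₀ ε with hs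
  set h : ℝ → ℝ := fun y => τ (y * w) * (y / x₀) ^ (-q) with hhdef
  have hball : ∀ y ∈ s, |y - x₀| < ε := by
    intro y hy
    have hy2 := Metric.mem_ball.mp hy
    rwa [Real.dist_eq] at hy2
  have hderiv : ∀ y ∈ s, HasDerivWithinAt h 0 s y := by
    intro y hy
    have hyε := hball y hy
    have hyδ : |y - x₀| < δ := lt_of_lt_of_le hyε (min_le_left _ _)
    have hyε₀ : |y - x₀| < ε₀ := lt_of_lt_of_le hyε ((min_le_right _ _).trans (min_le_left _ _))
    have hya : |y - x₀| < |x₀| := lt_of_lt_of_le hyε ((min_le_right _ _).trans (min_le_right _ _))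
    have hyp : 0 < y / x₀ := hpos y hya
    have hy0 : y ≠ 0 := by
      intro h0
      rw [h0] at hya
      simp at hya
    have hu : HasDerivAt (fun z : ℝ => τ (z * w)) (deriv τ (y * w) * w) y := by
      have := ((hτd (y * w)).hasDerivAt).comp y ((hasDerivAt_id y).mul_const w)
      simpa [Function.comp_def] using this
    have hr : HasDerivAt (fun z : ℝ => (z / x₀) ^ (-q))
        (-q * (y / x₀) ^ (-q - 1) * (1 / x₀)) y := by
      have hb : HasDerivAt (fun z : ℝ => z / x₀) (1 / x₀) y := by
        simpa using (hasDerivAt_id y).div_const x₀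
      have := (Real.hasDerivAt_rpow_const (p := -q) (Or.inl (ne_of_gt hyp))).comp y hb
      simpa [mul_comm, Function.comp_def] using this
    have hhd : HasDerivAt h
        (deriv τ (y * w) * w * (y / x₀) ^ (-q) +
          τ (y * w) * (-q * (y / x₀) ^ (-q - 1) * (1 / x₀))) y := hu.mul hr
    have hzero : deriv τ (y * w) * w * (y / x₀) ^ (-q) +
        τ (y * w) * (-q * (y / x₀) ^ (-q - 1) * (1 / x₀)) = 0 := by
      have hode := key y hyε₀
      have hsplit : (y / x₀) ^ (-q - 1) * (y / x₀) = (y / x₀) ^ (-q) := by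
        rw [← Real.rpow_add_one (ne_of_gt hyp)]
        norm_num
      have hy' : (y / x₀) ^ (-q - 1) = (y / x₀) ^ (-q) * (x₀ / y) := by
        rw [← hsplit]
        field_simp
      have hDw : deriv τ (y * w) * w = q * τ (y * w) / y := by
        rw [eq_div_iff hy0]
        calc deriv τ (y * w) * w * y = w * (y * deriv τ (y * w)) := by ring
          _ = w * (c * τ (y * w)) := by rw [hode]
          _ = q * τ (y * w) := by rw [hq]; ring
      rw [hy', hDw]
      field_simp
      ring
    rw [hzero] at hhd
    exact hhd.hasDerivWithinAt
  -- h is constant on the ball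
  have hconst : h x = h x₀ := by
    have hconv : Convex ℝ s := convex_ball x₀ ε
    have := hconv.norm_image_sub_le_of_norm_hasDerivWithin_le
      (f' := fun _ => (0 : ℝ)) hderiv (C := 0) (fun y _ => by simp)
      (Metric.mem_ball_self (lt_min hδ (lt_min hε₀ (abs_pos.mpr hx₀))))
      (by simpa [hs, Real.dist_eq, Metric.mem_ball] using hx)
    have h0 := this
    simp only [zero_mul] at h0
    have := norm_sub_eq_zero_iff.mp (le_antisymm h0 (norm_nonneg _))
    exact this
  -- unfold h x₀
  have hx₀w : h x₀ = τ (x₀ * w) := by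
    simp [hhdef, div_self hx₀]
  have hxpos : 0 < x / x₀ := hpos x hxa
  have hrx : (x / x₀ : ℝ) ^ (-q) ≠ 0 := ne_of_gt (Real.rpow_pos_of_pos hxpos _)
  have : τ (x * w) * (x / x₀) ^ (-q) = τ (x₀ * w) := hconst.trans hx₀w
  have hτx : τ (x * w) = τ (x₀ * w) * (x / x₀) ^ q := by
    have hinv : ((x / x₀ : ℝ) ^ (-q))⁻¹ = (x / x₀) ^ q := by
      rw [← Real.rpow_neg (le_of_lt hxpos), neg_neg]
    field_simp at this ⊢
    rw [← hinv]
    field_simp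
    linarith [this]
  rw [hτx, show (1 / x₀ * x : ℝ) = x / x₀ from by ring]
  field_simp
end

section
/- For the exponential activation, i.e., τ(x) = e^{-x} (so σ(x) = e^x), and any w > 0, x₀ ∈ R, the non-degeneracy quantity x₀ w [τ'(x₀w)/τ(x₀w) − τ''(x₀w)/τ'(x₀w)] equals 0, which differs from 1; consequently the two-point intersection obstruction of the previous proposition applies: for small δ > 0, if 0 < |x − x₀| < δ, y ≠ 0, and y e^{-xw} = y₀ e^{-x₀ w}, then there is no p with 0 < |p − w| < δ and y e^{-xp} = y₀ e^{-x₀ p}. -/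
/-- Exponential activation (`σ(x) = eˣ`, `τ(x) = e⁻ˣ`): the non-degeneracy quantity
`x₀ w [τ'/τ - τ''/τ']` at `x₀ w` equals `0 ≠ 1`, hence the two-point intersection
obstruction applies. -/
theorem exp_activation_no_double_intersection (τ : ℝ → ℝ)
    (hτ : τ = fun z => Real.exp (-z)) (w : ℝ) (hw : 0 < w) (x₀ y₀ : ℝ) (hy₀ : y₀ ≠ 0) :
    (x₀ * w * (deriv τ (x₀ * w) / τ (x₀ * w)
        - deriv (deriv τ) (x₀ * w) / deriv τ (x₀ * w)) = 0 ∧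
      x₀ * w * (deriv τ (x₀ * w) / τ (x₀ * w)
        - deriv (deriv τ) (x₀ * w) / deriv τ (x₀ * w)) ≠ 1) ∧
    ∃ δ > (0:ℝ), ∀ x y : ℝ, 0 < |x - x₀| → |x - x₀| < δ → y ≠ 0 →
      y * τ (x * w) = y₀ * τ (x₀ * w) →
      ¬ ∃ p : ℝ, 0 < |p - w| ∧ |p - w| < δ ∧ y * τ (x * p) = y₀ * τ (x₀ * p) := by
  subst hτ
  have hd : deriv (fun z => Real.exp (-z)) = fun z => -Real.exp (-z) := by
    ext z
    simpa [Function.comp_def] using (((Real.hasDerivAt_exp (-z)).comp z (hasDerivAt_neg z)).deriv)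
  have hd2 : deriv (deriv (fun z => Real.exp (-z))) = fun z => Real.exp (-z) := by
    rw [hd]
    ext z
    have : deriv (fun z : ℝ => -Real.exp (-z)) z = -(-Real.exp (-z)) := by
      rw [deriv.fun_neg]
      rw [hd]
    simpa using this
  constructor
  · rw [hd2, hd]
    have h := (Real.exp_pos (-(x₀ * w))).ne'
    constructor
    · simp only
      field_simp
      norm_num
    · simp only
      field_simp
      norm_num
  · refine ⟨1, one_pos, fun x y hx _ hy h1 ⟨p, hp, _, h2⟩ => ?_⟩
    have hx' : x - x₀ ≠ 0 := by simpa [abs_pos] using hx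
    simp only at h1 h2
    have h3 : y * (Real.exp (-(x*w)) * Real.exp (-(x₀*p)))
        = y * (Real.exp (-(x*p)) * Real.exp (-(x₀*w))) := by
      linear_combination Real.exp (-(x₀*p)) * h1 - Real.exp (-(x₀*w)) * h2
    have h4 := mul_left_cancel₀ hy h3
    rw [← Real.exp_add, ← Real.exp_add] at h4
    have h5 := Real.exp_injective h4
    have h6 : (x - x₀) * w = (x - x₀) * p := by ring_nf; ring_nf at h5; linarith
    have hpw : w = p := mul_left_cancel₀ hx' h6
    exact absurd hp (by simp [hpw])
end
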